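/- The Riccati recursion preserves positive semidefiniteness: if S' ⪰ 0, Q ⪰ 0, and R ≻ 0, then S = Q + Aᵀ S' A - Aᵀ S' B (Bᵀ S' B + R)⁻¹ Bᵀ S' A is symmetric positive semidefinite. -/
import Mathlib


open Matrix

/-- The Riccati recursion preserves positive semidefiniteness. -/
theorem riccati_posSemidef {n m : ℕ}
    (Q S' A : Matrix (Fin n) (Fin n) ℝ) (R : Matrix (Fin m) (Fin m) ℝ)
    (B : Matrix (Fin n) (Fin m) ℝ)
    (hQ : Q.PosSemidef) (hR : R.PosDef) (hS' : S'.PosSemidef) :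
    (Q + Aᵀ * S' * A - Aᵀ * S' * B * (Bᵀ * S' * B + R)⁻¹ * Bᵀ * S' * A).PosSemidef := by
  have hBSB : (Bᵀ * S' * B).PosSemidef := by
    simpa [conjTranspose_eq_transpose_of_trivial] using hS'.conjTranspose_mul_mul_same B
  have hM : (Bᵀ * S' * B + R).PosDef := Matrix.PosDef.posSemidef_add hBSB hR
  set M := Bᵀ * S' * B + R with hMdef
  have hMinv : IsUnit M.det := hM.det_pos.ne'.isUnit
  have hST : S'ᵀ = S' := by
    rw [← conjTranspose_eq_transpose_of_trivial]; exact hS'.1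
  have hRT : Rᵀ = R := by
    rw [← conjTranspose_eq_transpose_of_trivial]; exact hR.1
  have hMH : Mᵀ = M := by
    rw [← conjTranspose_eq_transpose_of_trivial]; exact hM.1
  have hMinvT : (M⁻¹)ᵀ = M⁻¹ := by
    have h := transpose_nonsing_inv M
    rw [hMH] at h
    exact h
  set K := M⁻¹ * Bᵀ * S' * A with hK
  have hKT : Kᵀ = Aᵀ * S' * B * M⁻¹ := by
    simp only [hK, transpose_mul, transpose_transpose, hST, hMinvT, Matrix.mul_assoc]
  have hMK : M * K = Bᵀ * S' * A := by
    simp only [hK, ← Matrix.mul_assoc]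
    rw [Matrix.mul_nonsing_inv _ hMinv, Matrix.one_mul]
  have key : Q + Aᵀ * S' * A - Aᵀ * S' * B * M⁻¹ * Bᵀ * S' * A
      = Q + ((A - B * K)ᵀ * S' * (A - B * K) + Kᵀ * R * K) := by
    have hexp : (A - B * K)ᵀ * S' * (A - B * K) + Kᵀ * R * K
        = Aᵀ * S' * A - Aᵀ * (S' * (B * K)) - Kᵀ * (Bᵀ * (S' * A)) + Kᵀ * (M * K) := by
      simp only [hMdef, transpose_sub, transpose_mul, Matrix.sub_mul, Matrix.mul_sub,
        Matrix.add_mul, Matrix.mul_add, Matrix.mul_assoc]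
      abel
    rw [hexp, hMK, hKT]
    simp only [hK, Matrix.mul_assoc]
    abel
  rw [key]
  refine hQ.add (PosSemidef.add ?_ ?_)
  · simpa [conjTranspose_eq_transpose_of_trivial] using
      hS'.conjTranspose_mul_mul_same (A - B * K)
  · simpa [conjTranspose_eq_transpose_of_trivial] using
      hR.posSemidef.conjTranspose_mul_mul_same K
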